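/- Consider deep matrix factorization with a single preconditioned gradient step of learning rate r and scalar preconditioner a with 0 < a ≤ Λ, starting from factors W̃_1,…,W̃_L with product W̃ satisfying ‖W̃_l‖ ≤ M for all l, ‖W̃ − W*‖ ≤ B, and ‖∇ℓ(W̃)‖_F ≤ τ, where ℓ(W) = (1/2)‖W − W*‖_F². If r ≤ 1/(2LΛM^{L−2}B), then the product W(1) after the step satisfies ‖W(1) − W̃‖_F² ≤ 2( r²L²Λ²M^{4L−4} + 4r⁴L⁴Λ⁴M^{6L−8}B² )·τ². -/

import Mathlib

/-!
Write `Δ_l = W_l(1) - W̃_l`. The gradient enters `Δ_l` between partial products whose spectral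
norms multiply to at most `M ^ (L - 1)`, so `‖Δ_l‖ ≤ d := r a M^{L-1} B` and
`‖Δ_l‖_F ≤ δ := r a M^{L-1} τ`. The errors `E_l = W_l(1) ⋯ W_1(1) - W̃_l ⋯ W̃_1` satisfy
`E_{l+1} = W̃_l E_l + Δ_l W_l(1) ⋯ W_1(1)` with `‖W_l(1) ⋯ W_1(1)‖ ≤ (M + d)^l`, whence
`‖E_L‖_F ≤ δ ∑_{i<L} (M + d)^i M^{L-1-i}`. The step-size condition gives `2 L d ≤ M`, and then
this geometric sum is at most `L M^{L-1} + L² d M^{L-2}`, a first-order term plus a second-order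
correction. Squaring with `(x + y)² ≤ 2 (x² + y²)` gives the bound.
-/

open scoped BigOperators
open Matrix

/-- Frobenius norm of a real matrix. -/
noncomputable def frobNorm {m n : Type*} [Fintype m] [Fintype n] (A : Matrix m n ℝ) : ℝ :=
  Real.sqrt (∑ i, ∑ j, (A i j) ^ 2)

/-- Spectral norm (largest singular value) of a real matrix. -/
noncomputable def specNorm {m n : Type*} [Fintype m] [Fintype n] (A : Matrix m n ℝ) : ℝ :=
  sSup {c | ∃ x : n → ℝ, (∑ j, x j ^ 2) = 1 ∧ c = Real.sqrt (∑ i, (A.mulVec x i) ^ 2)}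

open Finset
open scoped Matrix.Norms.L2Operator

section Norms

variable {m n p q : Type*} [Fintype m] [Fintype n] [Fintype p] [Fintype q]

theorem specNorm_eq_l2_opNorm [DecidableEq n] (A : Matrix m n ℝ) : specNorm A = ‖A‖ := by
  rw [l2_opNorm_def, ← ContinuousLinearMap.sSup_sphere_eq_norm, specNorm]
  congr 1
  ext c
  simp only [Set.mem_ofPred_eq, Set.mem_image, mem_sphere_zero_iff_norm, EuclideanSpace.norm_eq]
  constructor
  · rintro ⟨x, hx, rfl⟩
    exact ⟨WithLp.toLp 2 x, by simp [hx], by simp⟩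
  · rintro ⟨x, hx, rfl⟩
    exact ⟨x.ofLp, by simpa using hx, by simp⟩

theorem l2_opNorm_one_le [DecidableEq n] : ‖(1 : Matrix n n ℝ)‖ ≤ 1 := by
  rw [← l2_opNorm_toEuclideanCLM, map_one]
  exact ContinuousLinearMap.norm_id_le

theorem l2_opNorm_transpose [DecidableEq m] [DecidableEq n] (A : Matrix m n ℝ) : ‖Aᵀ‖ = ‖A‖ := by
  rw [← conjTranspose_eq_transpose_of_trivial, l2_opNorm_conjTranspose]

theorem sum_mulVec_sq_le [DecidableEq n] (A : Matrix m n ℝ) (x : n → ℝ) :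
    ∑ i, (A *ᵥ x) i ^ 2 ≤ ‖A‖ ^ 2 * ∑ j, x j ^ 2 := by
  have h := pow_le_pow_left₀ (norm_nonneg _) (l2_opNorm_mulVec A (WithLp.toLp 2 x)) 2
  simpa [mul_pow, EuclideanSpace.real_norm_sq_eq] using h

theorem frobNorm_eq_norm_toLp (A : Matrix m n ℝ) :
    frobNorm A = ‖WithLp.toLp 2 (fun ij : m × n ↦ A ij.1 ij.2)‖ := by
  simp [frobNorm, EuclideanSpace.norm_eq, Fintype.sum_prod_type]

theorem frobNorm_nonneg (A : Matrix m n ℝ) : 0 ≤ frobNorm A := Real.sqrt_nonneg _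

theorem frobNorm_add_le (A B : Matrix m n ℝ) : frobNorm (A + B) ≤ frobNorm A + frobNorm B := by
  simp only [frobNorm_eq_norm_toLp]
  exact norm_add_le (WithLp.toLp 2 fun ij : m × n ↦ A ij.1 ij.2) (WithLp.toLp 2 fun ij ↦ B ij.1 ij.2)

theorem frobNorm_smul (c : ℝ) (A : Matrix m n ℝ) : frobNorm (c • A) = |c| * frobNorm A := by
  simp only [frobNorm_eq_norm_toLp, ← Real.norm_eq_abs, ← norm_smul]
  rfl

theorem frobNorm_transpose (A : Matrix m n ℝ) : frobNorm Aᵀ = frobNorm A := by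
  rw [frobNorm, frobNorm, sum_comm]
  rfl

theorem frobNorm_mul_le_l2_opNorm_mul [DecidableEq n] (A : Matrix m n ℝ) (B : Matrix n p ℝ) :
    frobNorm (A * B) ≤ ‖A‖ * frobNorm B := by
  have hsq : ∑ i, ∑ j, (A * B) i j ^ 2 ≤ ‖A‖ ^ 2 * ∑ k, ∑ j, B k j ^ 2 := by
    rw [sum_comm, sum_comm (f := fun k j ↦ B k j ^ 2), mul_sum]
    exact sum_le_sum fun j _ ↦ sum_mulVec_sq_le A (fun k ↦ B k j)
  calc frobNorm (A * B) ≤ Real.sqrt (‖A‖ ^ 2 * ∑ k, ∑ j, B k j ^ 2) := Real.sqrt_le_sqrt hsq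
    _ = ‖A‖ * frobNorm B := by
      rw [Real.sqrt_mul (sq_nonneg _), Real.sqrt_sq (norm_nonneg _), frobNorm]

theorem frobNorm_mul_le_mul_l2_opNorm [DecidableEq n] [DecidableEq p] (A : Matrix m n ℝ)
    (B : Matrix n p ℝ) : frobNorm (A * B) ≤ frobNorm A * ‖B‖ := by
  rw [← frobNorm_transpose, transpose_mul, ← frobNorm_transpose A, ← l2_opNorm_transpose B,
    mul_comm]
  exact frobNorm_mul_le_l2_opNorm_mul _ _

variable [DecidableEq m] [DecidableEq n] [DecidableEq p] [DecidableEq q]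
  {W W' : Matrix n m ℝ} {A : Matrix p n ℝ} {G : Matrix p q ℝ} {B : Matrix m q ℝ} {c K : ℝ}

theorem l2_opNorm_sub_le_of_eq_sub_smul (hW' : W' = W - c • (Aᵀ * G * Bᵀ)) (hc : 0 ≤ c)
    (hAB : ‖A‖ * ‖B‖ ≤ K) : ‖W' - W‖ ≤ c * K * ‖G‖ := by
  rw [hW', sub_sub_cancel_left, norm_neg, norm_smul, Real.norm_of_nonneg hc, mul_assoc]
  gcongr
  calc ‖Aᵀ * G * Bᵀ‖ ≤ ‖Aᵀ‖ * ‖G‖ * ‖Bᵀ‖ :=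
        (l2_opNorm_mul _ _).trans (by gcongr; exact l2_opNorm_mul _ _)
    _ = ‖A‖ * ‖B‖ * ‖G‖ := by rw [l2_opNorm_transpose, l2_opNorm_transpose]; ring
    _ ≤ K * ‖G‖ := by gcongr

theorem frobNorm_sub_le_of_eq_sub_smul (hW' : W' = W - c • (Aᵀ * G * Bᵀ)) (hc : 0 ≤ c)
    (hAB : ‖A‖ * ‖B‖ ≤ K) : frobNorm (W' - W) ≤ c * K * frobNorm G := by
  rw [hW', sub_sub_cancel_left, ← neg_smul, frobNorm_smul, abs_neg, abs_of_nonneg hc, mul_assoc]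
  gcongr
  calc frobNorm (Aᵀ * G * Bᵀ) ≤ ‖Aᵀ‖ * frobNorm G * ‖Bᵀ‖ :=
        (frobNorm_mul_le_mul_l2_opNorm _ _).trans
          (by gcongr; exact frobNorm_mul_le_l2_opNorm_mul _ _)
    _ = ‖A‖ * ‖B‖ * frobNorm G := by rw [l2_opNorm_transpose, l2_opNorm_transpose]; ring
    _ ≤ K * frobNorm G := by gcongr; exact frobNorm_nonneg _

end Norms

section Elementary

variable {M d : ℝ}

theorem add_pow_succ_le (hM : 0 ≤ M) (hd : 0 ≤ d) {k : ℕ} (h : 2 * k * d ≤ M) :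
    (M + d) ^ (k + 1) ≤ M ^ (k + 1) + 2 * (k + 1) * d * M ^ k := by
  induction k with
  | zero => simp; linarith
  | succ k ih =>
    push_cast at h ih ⊢
    have ih := ih (by linarith)
    have hd2 : 2 * (k + 1) * d * d * M ^ k ≤ d * M ^ (k + 1) := by
      rw [pow_succ]
      have := mul_le_mul_of_nonneg_right h (mul_nonneg hd (pow_nonneg hM k))
      nlinarith
    calc (M + d) ^ (k + 1 + 1) = (M + d) * (M + d) ^ (k + 1) := pow_succ' _ _
      _ ≤ (M + d) * (M ^ (k + 1) + 2 * (k + 1) * d * M ^ k) := by gcongr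
      _ = M ^ (k + 1 + 1) + d * M ^ (k + 1) + 2 * (k + 1) * d * M ^ (k + 1)
            + 2 * (k + 1) * d * d * M ^ k := by ring
      _ ≤ M ^ (k + 1 + 1) + 2 * (k + 1 + 1) * d * M ^ (k + 1) := by linarith

theorem sum_range_two_mul_le_sq (L : ℕ) : ∑ i ∈ range L, (2 * i : ℝ) ≤ L ^ 2 := by
  induction L with
  | zero => simp
  | succ L ih => rw [sum_range_succ]; push_cast; nlinarith

theorem geom_sum₂_add_le (hd : 0 ≤ d) {L : ℕ} (h : 2 * L * d ≤ M) :
    ∑ i ∈ range L, (M + d) ^ i * M ^ (L - 1 - i) ≤ L * M ^ (L - 1) + L ^ 2 * d * M ^ (L - 2) := by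
  have hM : 0 ≤ M := le_trans (by positivity) h
  have hterm : ∀ i ∈ range L,
      (M + d) ^ i * M ^ (L - 1 - i) ≤ M ^ (L - 1) + 2 * i * d * M ^ (L - 2) := by
    intro i hi
    rw [mem_range] at hi
    rcases i with _ | k
    · simp
    · have hk : 2 * k * d ≤ M := le_trans (by gcongr; exact_mod_cast (by omega : k ≤ L)) h
      obtain ⟨j, rfl⟩ : ∃ j, L = k + 2 + j := ⟨L - (k + 2), by omega⟩
      rw [show k + 2 + j - 1 - (k + 1) = j by omega, show k + 2 + j - 1 = k + 1 + j by omega,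
        show k + 2 + j - 2 = k + j by omega]
      calc (M + d) ^ (k + 1) * M ^ j ≤ (M ^ (k + 1) + 2 * (k + 1) * d * M ^ k) * M ^ j := by
            gcongr; exact add_pow_succ_le hM hd hk
        _ = M ^ (k + 1 + j) + 2 * ((k + 1 : ℕ) : ℝ) * d * M ^ (k + j) := by push_cast; ring
  calc ∑ i ∈ range L, (M + d) ^ i * M ^ (L - 1 - i)
      ≤ ∑ i ∈ range L, (M ^ (L - 1) + 2 * i * d * M ^ (L - 2)) := sum_le_sum hterm
    _ = L * M ^ (L - 1) + (∑ i ∈ range L, (2 * i : ℝ)) * (d * M ^ (L - 2)) := by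
        rw [sum_add_distrib, sum_mul]; simp [mul_assoc]
    _ ≤ L * M ^ (L - 1) + L ^ 2 * d * M ^ (L - 2) := by
        rw [mul_assoc _ d]; gcongr; exact sum_range_two_mul_le_sq L

end Elementary

section Products

variable {ι : ℕ → Type*} [∀ l, Fintype (ι l)] [∀ l, DecidableEq (ι l)]
  {κ : Type*} [Fintype κ] {W W' : ∀ l, Matrix (ι (l + 1)) (ι l) ℝ} {L : ℕ} {M : ℝ}

theorem l2_opNorm_le_pow_of_mul_left [DecidableEq κ] {Q : ∀ l, Matrix (ι l) κ ℝ}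
    (hQ₀ : ‖Q 0‖ ≤ 1) (hQ : ∀ l < L, Q (l + 1) = W l * Q l) (hW : ∀ l < L, ‖W l‖ ≤ M) :
    ∀ l ≤ L, ‖Q l‖ ≤ M ^ l := by
  intro l hl
  induction l with
  | zero => simpa using hQ₀
  | succ l ih =>
    rw [hQ l hl, pow_succ']
    exact (l2_opNorm_mul _ _).trans <|
      mul_le_mul (hW l hl) (ih (by omega)) (norm_nonneg _) ((norm_nonneg _).trans (hW l hl))

theorem l2_opNorm_le_pow_of_mul_right {P : ∀ l, Matrix κ (ι l) ℝ}
    (hP₀ : ‖P L‖ ≤ 1) (hP : ∀ l < L, P l = P (l + 1) * W l) (hW : ∀ l < L, ‖W l‖ ≤ M) :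
    ∀ l ≤ L, ‖P l‖ ≤ M ^ (L - l) := by
  intro l hl
  induction hl using Nat.decreasingInduction with
  | self => simpa using hP₀
  | of_succ l hl ih =>
    rw [hP l hl, show L - l = L - (l + 1) + 1 by omega, pow_succ]
    exact (l2_opNorm_mul _ _).trans <|
      mul_le_mul ih (hW l hl) (norm_nonneg _) (pow_nonneg ((norm_nonneg _).trans (hW l hl)) _)

theorem l2_opNorm_mul_l2_opNorm_le_pow {Q : ∀ l, Matrix (ι l) (ι 0) ℝ}
    {P : ∀ l, Matrix (ι L) (ι l) ℝ} (hQ₀ : Q 0 = 1) (hQ : ∀ l < L, Q (l + 1) = W l * Q l)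
    (hP₀ : P L = 1) (hP : ∀ l < L, P l = P (l + 1) * W l) (hW : ∀ l < L, ‖W l‖ ≤ M)
    {l : ℕ} (hl : l < L) : ‖P (l + 1)‖ * ‖Q l‖ ≤ M ^ (L - 1) := by
  have hM : 0 ≤ M := (norm_nonneg _).trans (hW l hl)
  calc ‖P (l + 1)‖ * ‖Q l‖ ≤ M ^ (L - (l + 1)) * M ^ l := mul_le_mul
        (l2_opNorm_le_pow_of_mul_right (hP₀ ▸ l2_opNorm_one_le) hP hW (l + 1) hl)
        (l2_opNorm_le_pow_of_mul_left (hQ₀ ▸ l2_opNorm_one_le) hQ hW l hl.le)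
        (norm_nonneg _) (pow_nonneg hM _)
    _ = M ^ (L - 1) := by rw [← pow_add]; congr 1; omega

theorem frobNorm_sub_le_geom_sum₂ [DecidableEq κ] {Q Q' : ∀ l, Matrix (ι l) κ ℝ} {K δ : ℝ}
    (hQ₀ : Q' 0 = Q 0) (hQ : ∀ l < L, Q (l + 1) = W l * Q l)
    (hQ' : ∀ l < L, Q' (l + 1) = W' l * Q' l) (hW : ∀ l < L, ‖W l‖ ≤ M)
    (hWW' : ∀ l < L, frobNorm (W' l - W l) ≤ δ) (hQ'K : ∀ l < L, ‖Q' l‖ ≤ K ^ l) :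
    ∀ l ≤ L, frobNorm (Q' l - Q l) ≤ δ * ∑ i ∈ range l, K ^ i * M ^ (l - 1 - i) := by
  intro l hl
  induction l with
  | zero => simp [hQ₀, frobNorm]
  | succ l ih =>
    have hδ : 0 ≤ δ := (frobNorm_nonneg _).trans (hWW' l hl)
    have hM : 0 ≤ M := (norm_nonneg _).trans (hW l hl)
    have hsplit : Q' (l + 1) - Q (l + 1) = W l * (Q' l - Q l) + (W' l - W l) * Q' l := by
      rw [hQ l hl, hQ' l hl, Matrix.mul_sub, Matrix.sub_mul]
      abel
    calc frobNorm (Q' (l + 1) - Q (l + 1))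
        ≤ ‖W l‖ * frobNorm (Q' l - Q l) + frobNorm (W' l - W l) * ‖Q' l‖ := by
          rw [hsplit]
          exact (frobNorm_add_le _ _).trans (add_le_add (frobNorm_mul_le_l2_opNorm_mul _ _)
            (frobNorm_mul_le_mul_l2_opNorm _ _))
      _ ≤ M * (δ * ∑ i ∈ range l, K ^ i * M ^ (l - 1 - i)) + δ * K ^ l :=
          add_le_add (mul_le_mul (hW l hl) (ih (by omega)) (frobNorm_nonneg _) hM)
            (mul_le_mul (hWW' l hl) (hQ'K l hl) (norm_nonneg _) hδ)
      _ = δ * ∑ i ∈ range (l + 1), K ^ i * M ^ (l + 1 - 1 - i) := by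
          rw [Nat.add_sub_cancel, geom_sum₂_succ_eq]
          ring

theorem frobNorm_prod_sub_prod_le {Q Q' : ∀ l, Matrix (ι l) (ι 0) ℝ} {d δ : ℝ}
    (hQ₀ : Q 0 = 1) (hQ'₀ : Q' 0 = 1) (hQ : ∀ l < L, Q (l + 1) = W l * Q l)
    (hQ' : ∀ l < L, Q' (l + 1) = W' l * Q' l) (hW : ∀ l < L, ‖W l‖ ≤ M)
    (hWW' : ∀ l < L, ‖W' l - W l‖ ≤ d) (hWW'_frob : ∀ l < L, frobNorm (W' l - W l) ≤ δ)
    (hd : 0 ≤ d) (hδ : 0 ≤ δ) (h : 2 * L * d ≤ M) :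
    frobNorm (Q' L - Q L) ≤ δ * (L * M ^ (L - 1) + L ^ 2 * d * M ^ (L - 2)) := by
  have hW' : ∀ l < L, ‖W' l‖ ≤ M + d := fun l hl ↦
    (norm_le_insert' (W' l) (W l)).trans (add_le_add (hW l hl) (hWW' l hl))
  have hQ'_le := l2_opNorm_le_pow_of_mul_left (hQ'₀ ▸ l2_opNorm_one_le) hQ' hW'
  calc frobNorm (Q' L - Q L) ≤ δ * ∑ i ∈ range L, (M + d) ^ i * M ^ (L - 1 - i) :=
        frobNorm_sub_le_geom_sum₂ (hQ'₀.trans hQ₀.symm) hQ hQ' hW hWW'_frob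
          (fun l hl ↦ hQ'_le l hl.le) L le_rfl
    _ ≤ δ * (L * M ^ (L - 1) + L ^ 2 * d * M ^ (L - 2)) := by
        gcongr; exact geom_sum₂_add_le hd h

end Products

/-- One large preconditioned gradient step from a near-critical point in deep matrix
factorization moves the product matrix only a little. `Wt l` are the starting factors
(`W̃`), `W' l` the factors after the step, `Q l = W̃_l ⋯ W̃_1` (so `Q L` is the full
starting product `W̃`), `P l = W̃_L ⋯ W̃_{l+1}`; the loss is `ℓ(W) = ½‖W − W*‖_F²`
with gradient `Q L − W*`, and `Q' L` is the product `W(1)` after the step. -/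
theorem stmt6 (L : ℕ) (hL : 2 ≤ L) (n : ℕ → ℕ)
    (Wt W' : ∀ l : ℕ, Matrix (Fin (n (l + 1))) (Fin (n l)) ℝ)
    (Wstar : Matrix (Fin (n L)) (Fin (n 0)) ℝ)
    (Q Q' : ∀ l : ℕ, Matrix (Fin (n l)) (Fin (n 0)) ℝ)
    (P : ∀ l : ℕ, Matrix (Fin (n L)) (Fin (n l)) ℝ)
    (hQ0 : Q 0 = 1) (hQs : ∀ l < L, Q (l + 1) = Wt l * Q l)
    (hQ0' : Q' 0 = 1) (hQs' : ∀ l < L, Q' (l + 1) = W' l * Q' l)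
    (hPL : P L = 1) (hPs : ∀ l < L, P l = P (l + 1) * Wt l)
    (r a Λ M B τ : ℝ) (hr0 : 0 < r) (ha : 0 < a) (haΛ : a ≤ Λ)
    (hupd : ∀ l < L, W' l = Wt l - (r * a) • ((P (l + 1))ᵀ * (Q L - Wstar) * (Q l)ᵀ))
    (hM : ∀ l < L, specNorm (Wt l) ≤ M)
    (hB : specNorm (Q L - Wstar) ≤ B)
    (hτ : frobNorm (Q L - Wstar) ≤ τ)
    (hrs : r ≤ 1 / (2 * (L : ℝ) * Λ * M ^ (L - 2) * B)) :
    frobNorm (Q' L - Q L) ^ 2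
      ≤ 2 * (r ^ 2 * (L : ℝ) ^ 2 * Λ ^ 2 * M ^ (4 * L - 4)
          + 4 * r ^ 4 * (L : ℝ) ^ 4 * Λ ^ 4 * M ^ (6 * L - 8) * B ^ 2) * τ ^ 2 := by
  simp only [specNorm_eq_l2_opNorm] at hM hB
  have hM0 : 0 ≤ M := (norm_nonneg _).trans (hM 0 (by omega))
  have hB0 : 0 ≤ B := (norm_nonneg _).trans hB
  have hτ0 : 0 ≤ τ := (frobNorm_nonneg _).trans hτ
  have hra : 0 ≤ r * a := (mul_pos hr0 ha).le
  have hM1 : M ^ (L - 1) = M ^ (L - 2) * M := by rw [← pow_succ]; congr 1; omega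
  have h2Ld : 2 * L * (r * a * M ^ (L - 1) * B) ≤ M := by
    have hD : 0 < 2 * (L : ℝ) * Λ * M ^ (L - 2) * B := by
      by_contra! hD
      linarith [one_div_nonpos.mpr hD]
    calc 2 * L * (r * a * M ^ (L - 1) * B) ≤ 2 * L * (r * Λ * M ^ (L - 1) * B) := by gcongr
      _ = r * (2 * L * Λ * M ^ (L - 2) * B) * M := by rw [hM1]; ring
      _ ≤ M := mul_le_of_le_one_left hM0 ((le_div_iff₀ hD).1 hrs)
  have hPQ := fun l (hl : l < L) ↦ l2_opNorm_mul_l2_opNorm_le_pow hQ0 hQs hPL hPs hM hl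
  have hE := frobNorm_prod_sub_prod_le (d := r * a * M ^ (L - 1) * B)
    (δ := r * a * M ^ (L - 1) * τ) hQ0 hQ0' hQs hQs' hM
    (fun l hl ↦ (l2_opNorm_sub_le_of_eq_sub_smul (hupd l hl) hra (hPQ l hl)).trans (by gcongr))
    (fun l hl ↦ (frobNorm_sub_le_of_eq_sub_smul (hupd l hl) hra (hPQ l hl)).trans (by gcongr))
    (by positivity) (by positivity) h2Ld
  rw [show M ^ (4 * L - 4) = (M ^ (L - 2) * M) ^ 4 by rw [← pow_succ, ← pow_mul]; congr 1; omega,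
    show M ^ (6 * L - 8) = (M ^ (L - 2) * M) ^ 4 * (M ^ (L - 2)) ^ 2 by
      rw [← pow_succ, ← pow_mul, ← pow_mul, ← pow_add]; congr 1; omega]
  calc frobNorm (Q' L - Q L) ^ 2
      ≤ (r * a * M ^ (L - 1) * τ * L * M ^ (L - 1)
          + r * a * M ^ (L - 1) * τ * L ^ 2 * (r * a * M ^ (L - 1) * B) * M ^ (L - 2)) ^ 2 :=
        pow_le_pow_left₀ (frobNorm_nonneg _) (hE.trans_eq (by ring)) 2
    _ ≤ 2 * ((r * a * M ^ (L - 1) * τ * L * M ^ (L - 1)) ^ 2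
          + (r * a * M ^ (L - 1) * τ * L ^ 2 * (r * a * M ^ (L - 1) * B) * M ^ (L - 2)) ^ 2) :=
        add_sq_le
    _ = 2 * (r ^ 2 * L ^ 2 * a ^ 2 * (M ^ (L - 2) * M) ^ 4
          + 1 * r ^ 4 * L ^ 4 * a ^ 4 * ((M ^ (L - 2) * M) ^ 4 * (M ^ (L - 2)) ^ 2) * B ^ 2)
          * τ ^ 2 := by rw [hM1]; ring
    -- the factor `1` lines up with the `4` of the target, so `gcongr` leaves `1 ≤ 4`
    _ ≤ _ := by gcongr; norm_num
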